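/- Suppose U: ℝ^d → ℝ is four times differentiable with |∇³U(x)[u,v,w]| ≤ C₃‖X^⊤u‖_∞‖X^⊤v‖_∞‖w‖₂ and |∇⁴U(x)[u,u,u,u]| ≤ C₄‖X^⊤u‖_∞⁴ for all x,u,v,w. Then for any q, p ∈ ℝ^d and τ > 0: |p^⊤[∇²U(q) − ∇²U(q + τp)]p| ≤ τ·C₃·‖X^⊤p‖_∞²·‖p‖₂ + τ²·C₄·‖X^⊤p‖_∞⁴. -/

import Mathlib

/-!
Along the line `t ↦ q + t • p` the quadratic form `t ↦ ∇²U(q + t p)[p, p]` has derivative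
`∇³U(q + t p)[p, p, p]`, which the third-order bound controls by `C₃ ‖X⊤p‖_∞² ‖p‖`. The mean value
inequality therefore bounds the variation on `[0, τ]` by `τ C₃ ‖X⊤p‖_∞² ‖p‖`, and the fourth-order
term is nonnegative since it dominates `|∇⁴U(q)[p, p, p, p]|`.
-/

section IteratedFDerivAlongLine

variable {𝕜 E F : Type*} [RCLike 𝕜] [NormedAddCommGroup E] [NormedSpace 𝕜 E]
  [NormedAddCommGroup F] [NormedSpace 𝕜 F] {f : E → F} {n : ℕ}

theorem hasDerivAt_iteratedFDeriv_apply_add_smul (hf : ContDiff 𝕜 (n + 1) f)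
    (x v : E) (m : Fin n → E) (t : 𝕜) :
    HasDerivAt (fun s : 𝕜 => iteratedFDeriv 𝕜 n f (x + s • v) m)
      (iteratedFDeriv 𝕜 (n + 1) f (x + t • v) (Fin.cons v m)) t := by
  have hline : HasDerivAt (fun s : 𝕜 => x + s • v) v t := by
    simpa using ((hasDerivAt_id t).smul_const v).const_add x
  have hdiff : Differentiable 𝕜 (iteratedFDeriv 𝕜 n f) :=
    (hf.iteratedFDeriv_right (m := 1) (add_comm _ _).le).differentiable one_ne_zero
  rw [iteratedFDeriv_succ_apply_left]
  exact (ContinuousMultilinearMap.apply 𝕜 (fun _ : Fin n => E) F m).hasFDerivAt.comp_hasDerivAt t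
    ((hdiff _).hasFDerivAt.comp_hasDerivAt t hline)

theorem norm_iteratedFDeriv_apply_add_smul_sub_le (hf : ContDiff 𝕜 (n + 1) f)
    (x v : E) (m : Fin n → E) (τ : 𝕜) {C : ℝ}
    (hC : ∀ y, ‖iteratedFDeriv 𝕜 (n + 1) f y (Fin.cons v m)‖ ≤ C) :
    ‖iteratedFDeriv 𝕜 n f (x + τ • v) m - iteratedFDeriv 𝕜 n f x m‖ ≤ C * ‖τ‖ := by
  simpa using convex_univ.norm_image_sub_le_of_norm_hasDerivWithin_le
    (fun t _ => (hasDerivAt_iteratedFDeriv_apply_add_smul hf x v m t).hasDerivWithinAt)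
    (fun t _ => hC _) (Set.mem_univ 0) (Set.mem_univ τ)

end IteratedFDerivAlongLine

open scoped RealInnerProductSpace

theorem hessian_quadratic_variation_bound_general
    {d r : ℕ} (U : EuclideanSpace ℝ (Fin d) → ℝ) (hU : ContDiff ℝ 4 U)
    (C₃ C₄ : ℝ) (X : Fin r → EuclideanSpace ℝ (Fin d))
    (h3 : ∀ x u v w : EuclideanSpace ℝ (Fin d),
      |iteratedFDeriv ℝ 3 U x ![u, v, w]| ≤
        C₃ * (⨆ i : Fin r, |⟪X i, u⟫|) * (⨆ i : Fin r, |⟪X i, v⟫|) * ‖w‖)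
    (h4 : ∀ x u : EuclideanSpace ℝ (Fin d),
      |iteratedFDeriv ℝ 4 U x ![u, u, u, u]| ≤ C₄ * (⨆ i : Fin r, |⟪X i, u⟫|) ^ 4)
    (q p : EuclideanSpace ℝ (Fin d)) (τ : ℝ) (hτ : 0 < τ) :
    |iteratedFDeriv ℝ 2 U q ![p, p] - iteratedFDeriv ℝ 2 U (q + τ • p) ![p, p]| ≤
      τ * C₃ * (⨆ i : Fin r, |⟪X i, p⟫|) ^ 2 * ‖p‖
        + τ ^ 2 * C₄ * (⨆ i : Fin r, |⟪X i, p⟫|) ^ 4 := by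
  set M := ⨆ i : Fin r, |⟪X i, p⟫|
  have hvariation := norm_iteratedFDeriv_apply_add_smul_sub_le (n := 2)
    (hU.of_le (by norm_num)) q p ![p, p] τ (C := C₃ * M * M * ‖p‖) (fun y => h3 y p p p)
  have hquartic : 0 ≤ τ ^ 2 * C₄ * M ^ 4 := by
    rw [mul_assoc]
    exact mul_nonneg (sq_nonneg τ) ((abs_nonneg _).trans (h4 q p))
  rw [abs_sub_comm]
  rw [Real.norm_eq_abs, Real.norm_eq_abs, abs_of_pos hτ] at hvariation
  linarith

/-- **Hessian quadratic-form variation bound from third- and fourth-order regularity.**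
If `|∇³U(x)[u,v,w]| ≤ C₃ ‖X⊤u‖_∞ ‖X⊤v‖_∞ ‖w‖` and
`|∇⁴U(x)[u,u,u,u]| ≤ C₄ ‖X⊤u‖_∞⁴`, then for any `q, p` and `τ > 0`,
`|p⊤[∇²U(q) − ∇²U(q + τp)]p| ≤ τ C₃ ‖X⊤p‖_∞² ‖p‖ + τ² C₄ ‖X⊤p‖_∞⁴`. -/
theorem hessian_quadratic_variation_bound
    {d r : ℕ} (U : EuclideanSpace ℝ (Fin d) → ℝ) (hU : ContDiff ℝ 4 U)
    (C₃ C₄ : ℝ) (X : Fin r → EuclideanSpace ℝ (Fin d)) (hX : ∀ i, ‖X i‖ = 1)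
    (h3 : ∀ x u v w : EuclideanSpace ℝ (Fin d),
      |iteratedFDeriv ℝ 3 U x ![u, v, w]| ≤
        C₃ * (⨆ i : Fin r, |⟪X i, u⟫|) * (⨆ i : Fin r, |⟪X i, v⟫|) * ‖w‖)
    (h4 : ∀ x u : EuclideanSpace ℝ (Fin d),
      |iteratedFDeriv ℝ 4 U x ![u, u, u, u]| ≤ C₄ * (⨆ i : Fin r, |⟪X i, u⟫|) ^ 4)
    (q p : EuclideanSpace ℝ (Fin d)) (τ : ℝ) (hτ : 0 < τ) :
    |iteratedFDeriv ℝ 2 U q ![p, p] - iteratedFDeriv ℝ 2 U (q + τ • p) ![p, p]| ≤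
      τ * C₃ * (⨆ i : Fin r, |⟪X i, p⟫|) ^ 2 * ‖p‖
        + τ ^ 2 * C₄ * (⨆ i : Fin r, |⟪X i, p⟫|) ^ 4 :=
  hessian_quadratic_variation_bound_general U hU C₃ C₄ X h3 h4 q p τ hτ
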